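/- Let γ,β∈ℝ with β≠0 satisfy either 0<γ≤β<1 or β<γ≤1, and let B(y)=(y+(β−1)y^{1+β}−βy^β)/(β(β−1)) (note β<1 and β≠0,1 in both cases). Define Υ(y)=3(1−y)+3(β−γ)B(y)y^{−β} for y>0. Then Υ(y)>0 for all y∈(0,1), and lim_{y→0⁺}Υ(y)=3(1−γ)/(1−β) ≥ 0. -/

import Mathlib

/-!
Multiplying out `y ^ (-β)` turns `Υ` into an expression in `y ^ (1 - β)` and `y` alone, which
splits as `3 (y^{1-β} - y)/β + 3 (1 - γ) D(y)` with
`D(y) = (y^{1-β} + (β - 1) y - β)/(β(β - 1))`. The first term is positive on `(0, 1)` because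
`y^{1-β}` lies on the same side of `y` as `β` of `0`, and `D ≥ 0` is Bernoulli's inequality for
the exponent `1 - β`. As `1 - β > 0`, the rewritten form is continuous at `0`, which gives the limit.
-/

open Real Set Filter Topology

noncomputable section

/-- The function `B(y) = (y + (β−1)y^{1+β} − βy^β)/(β(β−1))` of the polytropic
elastic model (case `β ≠ 1`). -/
def Bfun (β y : ℝ) : ℝ := (y + (β - 1) * y ^ (1 + β) - β * y ^ β) / (β * (β - 1))

/-- `Υ(y) = 3(1−y) + 3(β−γ)B(y)y^{−β}`, the function appearing in the planar
dynamical system of the polytropic static problem. -/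
def Upsilon (γ β y : ℝ) : ℝ := 3 * (1 - y) + 3 * (β - γ) * Bfun β y * y ^ (-β)

lemma Bfun_mul_rpow_neg (β : ℝ) {y : ℝ} (hy : 0 < y) :
    Bfun β y * y ^ (-β) = (y ^ (1 - β) + (β - 1) * y - β) / (β * (β - 1)) := by
  have h1 : y ^ (1 + β) * y ^ (-β) = y := by rw [← rpow_add hy]; simp
  have h2 : y ^ β * y ^ (-β) = 1 := by rw [← rpow_add hy]; simp
  have h3 : y * y ^ (-β) = y ^ (1 - β) := by
    rw [sub_eq_add_neg, rpow_add hy, rpow_one]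
  rw [Bfun, div_mul_eq_mul_div, sub_mul, add_mul, mul_assoc, mul_assoc, h1, h2, h3, mul_one]

lemma Upsilon_eq (γ β : ℝ) {y : ℝ} (hy : 0 < y) :
    Upsilon γ β y =
      3 * (1 - y) + 3 * (β - γ) * ((y ^ (1 - β) + (β - 1) * y - β) / (β * (β - 1))) := by
  rw [Upsilon, mul_assoc, Bfun_mul_rpow_neg β hy]

lemma Upsilon_eq_add {γ β y : ℝ} (hβ0 : β ≠ 0) (hβ1 : β ≠ 1) (hy : 0 < y) :
    Upsilon γ β y = 3 * (y ^ (1 - β) - y) / β +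
      3 * (1 - γ) * ((y ^ (1 - β) + (β - 1) * y - β) / (β * (β - 1))) := by
  have hβ1' : β - 1 ≠ 0 := sub_ne_zero.mpr hβ1
  rw [Upsilon_eq γ β hy]
  field_simp
  ring

lemma rpow_one_sub_sub_self_div_pos {β y : ℝ} (hβ0 : β ≠ 0) (hy0 : 0 < y) (hy1 : y < 1) :
    0 < (y ^ (1 - β) - y) / β := by
  rcases hβ0.lt_or_gt with hβ | hβ
  · have : y ^ (1 - β) < y ^ (1 : ℝ) := rpow_lt_rpow_of_exponent_gt hy0 hy1 (by linarith)
    rw [rpow_one] at this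
    exact div_pos_of_neg_of_neg (by linarith) hβ
  · have : y ^ (1 : ℝ) < y ^ (1 - β) := rpow_lt_rpow_of_exponent_gt hy0 hy1 (by linarith)
    rw [rpow_one] at this
    exact div_pos (by linarith) hβ

lemma bernoulli_div_nonneg {β y : ℝ} (hβ0 : β ≠ 0) (hβ1 : β < 1) (hy : 0 < y) :
    0 ≤ (y ^ (1 - β) + (β - 1) * y - β) / (β * (β - 1)) := by
  have hs : (-1 : ℝ) ≤ y - 1 := by linarith
  rcases hβ0.lt_or_gt with hβ | hβ
  · have h := one_add_mul_self_le_rpow_one_add hs (by linarith : (1 : ℝ) ≤ 1 - β)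
    rw [add_sub_cancel] at h
    exact div_nonneg (by linarith) (mul_nonneg_of_nonpos_of_nonpos hβ.le (by linarith))
  · have h := rpow_one_add_le_one_add_mul_self hs (by linarith : (0 : ℝ) ≤ 1 - β)
      (by linarith : 1 - β ≤ 1)
    rw [add_sub_cancel] at h
    exact div_nonneg_of_nonpos (by linarith) (mul_nonpos_of_nonneg_of_nonpos hβ.le (by linarith))

lemma Upsilon_pos_of_mem_Ioo {γ β y : ℝ} (hβ0 : β ≠ 0) (hβ1 : β < 1) (hγ1 : γ ≤ 1)
    (hy : y ∈ Ioo (0 : ℝ) 1) : 0 < Upsilon γ β y := by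
  rw [Upsilon_eq_add hβ0 hβ1.ne hy.1, mul_div_assoc]
  exact add_pos_of_pos_of_nonneg
    (mul_pos three_pos (rpow_one_sub_sub_self_div_pos hβ0 hy.1 hy.2))
    (mul_nonneg (by linarith) (bernoulli_div_nonneg hβ0 hβ1 hy.1))

lemma tendsto_Upsilon_nhdsGT_zero (γ : ℝ) {β : ℝ} (hβ0 : β ≠ 0) (hβ1 : β < 1) :
    Tendsto (Upsilon γ β) (𝓝[>] 0) (𝓝 (3 * (1 - γ) / (1 - β))) := by
  set f : ℝ → ℝ := fun y ↦
    3 * (1 - y) + 3 * (β - γ) * ((y ^ (1 - β) + (β - 1) * y - β) / (β * (β - 1)))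
  have hcont : ContinuousAt f 0 := by
    have := continuousAt_rpow_const 0 (1 - β) (Or.inr (by linarith))
    fun_prop
  have hf0 : f 0 = 3 * (1 - γ) / (1 - β) := by
    have hβ1' : β - 1 ≠ 0 := sub_ne_zero.mpr hβ1.ne
    have hβ1'' : 1 - β ≠ 0 := sub_ne_zero.mpr hβ1.ne'
    simp only [f, zero_rpow hβ1'', mul_zero, sub_zero, zero_add]
    field_simp
    ring
  rw [← hf0]
  refine (hcont.tendsto.mono_left nhdsWithin_le_nhds).congr' ?_
  filter_upwards [self_mem_nhdsWithin] with y hy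
  exact (Upsilon_eq γ β hy).symm

/-- If `0 < γ ≤ β < 1` or `β < γ ≤ 1` (`β ≠ 0`), then `Υ > 0` on `(0,1)` and
`Υ(y) → 3(1−γ)/(1−β) ≥ 0` as `y → 0⁺`. -/
theorem Upsilon_pos (γ β : ℝ) (hβ0 : β ≠ 0)
    (hcase : (0 < γ ∧ γ ≤ β ∧ β < 1) ∨ (β < γ ∧ γ ≤ 1)) :
    (∀ y ∈ Ioo (0:ℝ) 1, 0 < Upsilon γ β y) ∧
    Tendsto (fun y => Upsilon γ β y) (𝓝[>] (0:ℝ))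
      (𝓝 (3 * (1 - γ) / (1 - β))) ∧
    0 ≤ 3 * (1 - γ) / (1 - β) := by
  have hβ1 : β < 1 := by rcases hcase with ⟨-, -, h⟩ | ⟨h, h'⟩ <;> linarith
  have hγ1 : γ ≤ 1 := by rcases hcase with ⟨-, h, h'⟩ | ⟨-, h⟩ <;> linarith
  exact ⟨fun y hy ↦ Upsilon_pos_of_mem_Ioo hβ0 hβ1 hγ1 hy,
    tendsto_Upsilon_nhdsGT_zero γ hβ0 hβ1, div_nonneg (by linarith) (by linarith)⟩
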